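/- For A, B ∈ 𝒫_J: (i) A ♯^J B = B ♯^J A, and (ii) (A ♯^J B)^{-1} = A^{-1} ♯^J B^{-1}. -/

import Mathlib

/-!
`P ♯ Q` is the unique positive definite solution `X` of `X P⁻¹ X = Q`: congruence by `P^{-1/2}`
turns this equation into `(P^{-1/2} X P^{-1/2})² = P^{-1/2} Q P^{-1/2}`, and positive square roots
are unique. Inverting `X P⁻¹ X = Q` gives `X Q⁻¹ X = P` and `X⁻¹ P X⁻¹ = Q⁻¹`, hence
`P ♯ Q = Q ♯ P` and `(P ♯ Q)⁻¹ = P⁻¹ ♯ Q⁻¹`. The same uniqueness shows that `♯` commutes with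
unitary congruence; as `J` is a unitary involution and `J A⁻¹ = J (J A)⁻¹ J`, both identities pass
to `♯^J`.
-/

open Matrix
open scoped ComplexOrder

noncomputable def sigJ (p q : ℕ) : Matrix (Fin p ⊕ Fin q) (Fin p ⊕ Fin q) ℂ :=
  Matrix.fromBlocks 1 0 0 (-1)

/-- Real power of a matrix via the continuous functional calculus; for a positive definite
matrix this is the usual power. -/
noncomputable def mpow {p q : ℕ} (A : Matrix (Fin p ⊕ Fin q) (Fin p ⊕ Fin q) ℂ) (t : ℝ) :
    Matrix (Fin p ⊕ Fin q) (Fin p ⊕ Fin q) ℂ :=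
  cfc (fun x : ℝ => x ^ t) A

/-- The J-power `X^t_J := J·(J X)^t`. -/
noncomputable def Jpow {p q : ℕ} (X : Matrix (Fin p ⊕ Fin q) (Fin p ⊕ Fin q) ℂ) (t : ℝ) :
    Matrix (Fin p ⊕ Fin q) (Fin p ⊕ Fin q) ℂ :=
  sigJ p q * mpow (sigJ p q * X) t

/-- The geometric mean `P ♯ Q = P^{1/2} (P^{-1/2} Q P^{-1/2})^{1/2} P^{1/2}` of positive
definite matrices. -/
noncomputable def gmean {p q : ℕ} (P Q : Matrix (Fin p ⊕ Fin q) (Fin p ⊕ Fin q) ℂ) :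
    Matrix (Fin p ⊕ Fin q) (Fin p ⊕ Fin q) ℂ :=
  mpow P (1 / 2) * mpow (mpow P (-(1 / 2)) * Q * mpow P (-(1 / 2))) (1 / 2) * mpow P (1 / 2)

/-- The J-geometric mean `A ♯^J B := J·((J A) ♯ (J B))`. -/
noncomputable def sharpJ {p q : ℕ} (A B : Matrix (Fin p ⊕ Fin q) (Fin p ⊕ Fin q) ℂ) :
    Matrix (Fin p ⊕ Fin q) (Fin p ⊕ Fin q) ℂ :=
  sigJ p q * gmean (sigJ p q * A) (sigJ p q * B)

section PosDef
variable {n : Type*} [Fintype n] [DecidableEq n]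

lemma Matrix.PosDef.pos_of_mem_spectrum {P : Matrix n n ℂ} (hP : P.PosDef) {x : ℝ}
    (hx : x ∈ spectrum ℝ P) : 0 < x := by
  obtain ⟨i, rfl⟩ := hP.1.spectrum_real_eq_range_eigenvalues ▸ hx
  exact hP.eigenvalues_pos i

lemma Matrix.PosDef.mul_mul_self_of_isHermitian {Q H : Matrix n n ℂ} (hQ : Q.PosDef)
    (hH : H.IsHermitian) (hHu : IsUnit H) : (H * Q * H).PosDef := by
  simpa only [star_eq_conjTranspose, hH.eq] using
    (IsUnit.posDef_star_right_conjugate_iff hHu).2 hQ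

lemma Matrix.inv_mul_inv_mul_self {X P : Matrix n n ℂ} (hP : IsUnit P.det) :
    (X * P⁻¹ * X)⁻¹ = X⁻¹ * P * X⁻¹ := by
  rw [mul_inv_rev, mul_inv_rev, nonsing_inv_nonsing_inv P hP, mul_assoc]

lemma Matrix.mul_inv_mul_self_eq_symm {X P Q : Matrix n n ℂ} (hX : IsUnit X.det)
    (hP : IsUnit P.det) (h : X * P⁻¹ * X = Q) : X * Q⁻¹ * X = P := by
  rw [← h, inv_mul_inv_mul_self hP, ← mul_assoc, ← mul_assoc, mul_nonsing_inv _ hX, one_mul,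
    mul_assoc, nonsing_inv_mul _ hX, mul_one]

lemma conj_mul_conj_of_mem_unitary {R : Type*} [Monoid R] [StarMul R] {U A B : R}
    (hU : U ∈ unitary R) : U * A * star U * (U * B * star U) = U * (A * B) * star U := by
  rw [show U * A * star U * (U * B * star U) = U * A * (star U * U) * B * star U by
    simp only [mul_assoc], Unitary.star_mul_self_of_mem hU, mul_one, mul_assoc U A B]

lemma Matrix.inv_conj_of_mem_unitary {U P : Matrix n n ℂ} (hU : U ∈ unitary (Matrix n n ℂ))
    (hP : IsUnit P.det) : (U * P * star U)⁻¹ = U * P⁻¹ * star U :=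
  inv_eq_right_inv <| by
    rw [conj_mul_conj_of_mem_unitary hU, mul_nonsing_inv _ hP, mul_one,
      Unitary.mul_star_self_of_mem hU]

lemma Matrix.PosDef.conj_of_mem_unitary {U P : Matrix n n ℂ} (hU : U ∈ unitary (Matrix n n ℂ))
    (hP : P.PosDef) : (U * P * star U).PosDef :=
  (IsUnit.posDef_star_right_conjugate_iff
    (IsUnit.of_mul_eq_one _ (Unitary.mul_star_self_of_mem hU))).2 hP

lemma Matrix.PosDef.isUnit_det {P : Matrix n n ℂ} (hP : P.PosDef) : IsUnit P.det :=
  (isUnit_iff_isUnit_det P).1 hP.isUnit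

end PosDef

section mpow
variable {p q : ℕ} {P : Matrix (Fin p ⊕ Fin q) (Fin p ⊕ Fin q) ℂ}

lemma mpow_isHermitian (P : Matrix (Fin p ⊕ Fin q) (Fin p ⊕ Fin q) ℂ) (t : ℝ) :
    (mpow P t).IsHermitian :=
  cfc_predicate _ P

lemma mpow_add (hP : P.PosDef) (s t : ℝ) : mpow P s * mpow P t = mpow P (s + t) := by
  have hfin := P.finite_real_spectrum
  rw [mpow, mpow, mpow, ← cfc_mul _ _ P (hfin.continuousOn _) (hfin.continuousOn _)]
  exact cfc_congr fun x hx => (Real.rpow_add (hP.pos_of_mem_spectrum hx) s t).symm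

lemma mpow_zero (hP : P.PosDef) : mpow P 0 = 1 := by
  rw [mpow, cfc_congr (g := fun _ : ℝ => 1) fun x _ => Real.rpow_zero x]
  exact cfc_const_one ℝ P hP.1

lemma mpow_one (hP : P.PosDef) : mpow P 1 = P := by
  rw [mpow, cfc_congr (g := fun x : ℝ => x) fun x _ => Real.rpow_one x]
  exact cfc_id' ℝ P hP.1

lemma mpow_mul_mpow_neg (hP : P.PosDef) (t : ℝ) : mpow P t * mpow P (-t) = 1 := by
  rw [mpow_add hP, add_neg_cancel, mpow_zero hP]

lemma mpow_isUnit (hP : P.PosDef) (t : ℝ) : IsUnit (mpow P t) :=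
  IsUnit.of_mul_eq_one _ (mpow_mul_mpow_neg hP t)

lemma mpow_neg_one (hP : P.PosDef) : mpow P (-1) = P⁻¹ := by
  rw [← mpow_one hP, inv_eq_right_inv (mpow_mul_mpow_neg hP 1), mpow_one hP]

lemma mpow_posDef (hP : P.PosDef) (t : ℝ) : (mpow P t).PosDef := by
  have h := PosDef.one.mul_mul_self_of_isHermitian (mpow_isHermitian P (t / 2)) (mpow_isUnit hP _)
  rwa [mul_one, mpow_add hP, add_halves] at h

lemma mpow_conj_posDef (hP : P.PosDef) {Q : Matrix (Fin p ⊕ Fin q) (Fin p ⊕ Fin q) ℂ}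
    (hQ : Q.PosDef) (t : ℝ) : (mpow P t * Q * mpow P t).PosDef :=
  hQ.mul_mul_self_of_isHermitian (mpow_isHermitian P t) (mpow_isUnit hP t)

lemma mpow_half_mul_mpow_half (hP : P.PosDef) : mpow P (1 / 2) * mpow P (1 / 2) = P := by
  rw [mpow_add hP, add_halves, mpow_one hP]

lemma mpow_neg_half_mul_mpow_neg_half (hP : P.PosDef) :
    mpow P (-(1 / 2)) * mpow P (-(1 / 2)) = P⁻¹ := by
  rw [mpow_add hP, ← neg_add, add_halves, mpow_neg_one hP]

end mpow

section gmean
variable {p q : ℕ} {P Q X : Matrix (Fin p ⊕ Fin q) (Fin p ⊕ Fin q) ℂ}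

lemma gmean_posDef (hP : P.PosDef) (hQ : Q.PosDef) : (gmean P Q).PosDef :=
  mpow_conj_posDef hP (mpow_posDef (mpow_conj_posDef hP hQ _) _) _

lemma gmean_mul_inv_mul_gmean (hP : P.PosDef) (hQ : Q.PosDef) :
    gmean P Q * P⁻¹ * gmean P Q = Q := by
  set S := mpow P (1 / 2)
  set R := mpow P (-(1 / 2))
  set T := mpow (R * Q * R) (1 / 2)
  have hSR : S * R = 1 := mpow_mul_mpow_neg hP _
  have hRS : R * S = 1 := by simpa only [neg_neg] using mpow_mul_mpow_neg hP (-(1 / 2))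
  have hTT : T * T = R * Q * R := mpow_half_mul_mpow_half (mpow_conj_posDef hP hQ _)
  calc S * T * S * P⁻¹ * (S * T * S)
      = S * T * (S * R) * (R * S) * T * S := by
        rw [← mpow_neg_half_mul_mpow_neg_half hP]; noncomm_ring
    _ = S * (T * T) * S := by rw [hSR, hRS]; noncomm_ring
    _ = (S * R) * Q * (R * S) := by rw [hTT]; noncomm_ring
    _ = Q := by rw [hSR, hRS, one_mul, mul_one]

lemma eq_gmean_of_mul_inv_mul_self_eq (hP : P.PosDef) (hQ : Q.PosDef) (hX : X.PosDef)
    (h : X * P⁻¹ * X = Q) : X = gmean P Q := by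
  set R := mpow P (-(1 / 2))
  have hsq : ∀ Y, (R * Y * R) ^ 2 = R * (Y * P⁻¹ * Y) * R := fun Y => by
    rw [← mpow_neg_half_mul_mpow_neg_half hP]; noncomm_ring
  have hRR : R * X * R = R * gmean P Q * R := by
    open scoped MatrixOrder in
    refine (CFC.sq_eq_sq_iff _ _ (mpow_conj_posDef hP hX _).posSemidef.nonneg
      (mpow_conj_posDef hP (gmean_posDef hP hQ) _).posSemidef.nonneg).1 ?_
    rw [hsq, hsq, h, gmean_mul_inv_mul_gmean hP hQ]
  exact (mpow_isUnit hP _).mul_left_cancel ((mpow_isUnit hP _).mul_right_cancel hRR)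

lemma gmean_comm (hP : P.PosDef) (hQ : Q.PosDef) : gmean P Q = gmean Q P :=
  eq_gmean_of_mul_inv_mul_self_eq hQ hP (gmean_posDef hP hQ) <|
    mul_inv_mul_self_eq_symm (gmean_posDef hP hQ).isUnit_det hP.isUnit_det
      (gmean_mul_inv_mul_gmean hP hQ)

lemma gmean_inv (hP : P.PosDef) (hQ : Q.PosDef) : (gmean P Q)⁻¹ = gmean P⁻¹ Q⁻¹ :=
  eq_gmean_of_mul_inv_mul_self_eq hP.inv hQ.inv (gmean_posDef hP hQ).inv <| by
    rw [nonsing_inv_nonsing_inv P hP.isUnit_det, ← inv_mul_inv_mul_self hP.isUnit_det,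
      gmean_mul_inv_mul_gmean hP hQ]

lemma gmean_conj_of_mem_unitary {U : Matrix (Fin p ⊕ Fin q) (Fin p ⊕ Fin q) ℂ}
    (hU : U ∈ unitary _) (hP : P.PosDef) (hQ : Q.PosDef) :
    gmean (U * P * star U) (U * Q * star U) = U * gmean P Q * star U :=
  .symm <| eq_gmean_of_mul_inv_mul_self_eq (hP.conj_of_mem_unitary hU)
    (hQ.conj_of_mem_unitary hU) ((gmean_posDef hP hQ).conj_of_mem_unitary hU) <| by
    rw [inv_conj_of_mem_unitary hU hP.isUnit_det, conj_mul_conj_of_mem_unitary hU,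
      conj_mul_conj_of_mem_unitary hU, gmean_mul_inv_mul_gmean hP hQ]

end gmean

section sigJ
variable {p q : ℕ} {A B : Matrix (Fin p ⊕ Fin q) (Fin p ⊕ Fin q) ℂ}

lemma sigJ_mul_self : sigJ p q * sigJ p q = 1 := by
  simp [sigJ, fromBlocks_multiply, ← fromBlocks_one]

lemma star_sigJ : star (sigJ p q) = sigJ p q := by
  simp [sigJ, star_eq_conjTranspose, fromBlocks_conjTranspose]

lemma sigJ_mem_unitary : sigJ p q ∈ unitary _ := by
  simp only [Unitary.mem_iff, star_sigJ, sigJ_mul_self, and_self]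

lemma inv_sigJ : (sigJ p q)⁻¹ = sigJ p q :=
  inv_eq_right_inv sigJ_mul_self

lemma sigJ_mul_inv (A : Matrix (Fin p ⊕ Fin q) (Fin p ⊕ Fin q) ℂ) :
    sigJ p q * A⁻¹ = sigJ p q * (sigJ p q * A)⁻¹ * sigJ p q := by
  rw [Matrix.mul_inv_rev, inv_sigJ, ← mul_assoc, mul_assoc _ _ (sigJ p q), sigJ_mul_self, mul_one]

lemma sharpJ_comm (hA : (sigJ p q * A).PosDef) (hB : (sigJ p q * B).PosDef) :
    sharpJ A B = sharpJ B A := by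
  rw [sharpJ, sharpJ, gmean_comm hA hB]

lemma sharpJ_inv (hA : (sigJ p q * A).PosDef) (hB : (sigJ p q * B).PosDef) :
    (sharpJ A B)⁻¹ = sharpJ A⁻¹ B⁻¹ := by
  have hconj := gmean_conj_of_mem_unitary sigJ_mem_unitary hA.inv hB.inv
  rw [star_sigJ] at hconj
  rw [sharpJ, sharpJ, sigJ_mul_inv A, sigJ_mul_inv B, hconj, Matrix.mul_inv_rev, inv_sigJ,
    gmean_inv hA hB, ← mul_assoc, ← mul_assoc, sigJ_mul_self, one_mul]

end sigJ

theorem stmt18_general (p q : ℕ) (A B : Matrix (Fin p ⊕ Fin q) (Fin p ⊕ Fin q) ℂ)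
    (hposA : (sigJ p q * A).PosDef)
    (hposB : (sigJ p q * B).PosDef) :
    sharpJ A B = sharpJ B A ∧ (sharpJ A B)⁻¹ = sharpJ A⁻¹ B⁻¹ :=
  ⟨sharpJ_comm hposA hposB, sharpJ_inv hposA hposB⟩

/-- For `A, B ∈ 𝒫_J`: (i) `A ♯^J B = B ♯^J A`; (ii) `(A ♯^J B)⁻¹ = A⁻¹ ♯^J B⁻¹`. -/
theorem stmt18 (p q : ℕ) (A B : Matrix (Fin p ⊕ Fin q) (Fin p ⊕ Fin q) ℂ)
    (hA : Aᴴ = sigJ p q * A * sigJ p q) (hposA : (sigJ p q * A).PosDef)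
    (hB : Bᴴ = sigJ p q * B * sigJ p q) (hposB : (sigJ p q * B).PosDef) :
    sharpJ A B = sharpJ B A ∧ (sharpJ A B)⁻¹ = sharpJ A⁻¹ B⁻¹ :=
  stmt18_general p q A B hposA hposB
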